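/- arXiv:1704.01377 — 3 statements merged into one kernel-verified Lean document; each statement's English description precedes it below -/
import Mathlib

section
/- Let x_1, …, x_n be real numbers. For a permutation σ of {1,…,n} set T_k^σ = x_{σ(1)} + ⋯ + x_{σ(k)} and M_n^σ = max(0, T_1^σ, …, T_n^σ). Then the sum over all permutations σ of {1,…,n} of M_n^σ equals the sum over all permutations σ of x_{σ(1)} multiplied by the number of indices k ∈ {1,…,n} with T_k^σ > 0; that is, Σ_{σ ∈ S_n} M_n^σ = Σ_{σ ∈ S_n} x_{σ(1)} · #{k : 1 ≤ k ≤ n, T_k^σ > 0}. -/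
/-!
Write `Mₖ = max (0, T₁, …, Tₖ)` for the running maximum of the prefix sums of `x ∘ σ`, so that
`Mₙ = ∑ₖ (Mₖ - Mₖ₋₁)` and `Mₖ - Mₖ₋₁ = max (0, Tₖ - Mₖ₋₁)`. Rotating the first `k` entries of `σ`
cyclically, the `k` increments `Mₖ - Mₖ₋₁` add up to `max (0, Tₖ)` (Spitzer's cycle lemma), hence
`∑_σ (Mₖ - Mₖ₋₁) = k⁻¹ ∑_σ max (0, Tₖ)`. Since `Tₖ` is symmetric in the first `k` entries,
`∑_σ max (0, Tₖ) = ∑_σ [Tₖ > 0] (x_{σ 1} + ⋯ + x_{σ k}) = k ∑_σ [Tₖ > 0] x_{σ 1}`. Summing over `k`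
gives the identity.
-/

open Finset Equiv

theorem partialSups_congr {β : Type*} [SemilatticeSup β] {u v : ℕ → β} {t : ℕ}
    (h : ∀ s ≤ t, u s = v s) : partialSups u t = partialSups v t := by
  simp only [partialSups_apply]
  exact sup'_congr _ rfl fun s hs => h s (mem_Iic.mp hs)

theorem partialSups_eq_sum_fin_sub {α : Type*} [AddCommGroup α] [LinearOrder α] {u : ℕ → α}
    (hu : u 0 = 0) (n : ℕ) :
    partialSups u n = ∑ k : Fin n, (partialSups u (k + 1) - partialSups u k) := by
  rw [Fin.sum_univ_eq_sum_range (fun k => partialSups u (k + 1) - partialSups u k),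
    sum_range_sub, partialSups_zero, hu, sub_zero]

section OrderedGroup

variable {α : Type*} [AddCommGroup α] [LinearOrder α] [IsOrderedAddMonoid α]

theorem partialSups_add_one_sub (u : ℕ → α) (t : ℕ) :
    partialSups u (t + 1) - partialSups u t = max 0 (u (t + 1) - partialSups u t) := by
  rw [partialSups_add_one, ← max_sub_sub_right, sub_self]

/-- Spitzer's cycle lemma, for the prefix sums `u` of a sequence of period `t + 1` and period
sum `c`: the summand `j` is the last increment of the running maximum of the window starting
at `j`. -/
theorem sum_range_max_zero_sub_partialSups_shift {u : ℕ → α} {c : α} (t : ℕ)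
    (hu : ∀ i, u (i + (t + 1)) = u i + c) :
    ∑ j ∈ range (t + 1), max 0 (u (j + (t + 1)) - partialSups (fun s => u (j + s)) t) =
      max 0 c := by
  set F : ℕ → α := fun j => partialSups (fun s => u (j + s)) t with hF
  have le_F {j s : ℕ} (hs : s ≤ t) : u (j + s) ≤ F j :=
    le_partialSups_of_le (fun s => u (j + s)) hs
  rcases le_or_gt c 0 with hc | hc
  · refine (sum_eq_zero fun j _ => max_eq_left (sub_nonpos.mpr ?_)).trans (max_eq_left hc).symm
    rw [hu]
    exact (add_le_of_nonpos_right hc).trans (le_F (j := j) (Nat.zero_le t))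
  -- for `c > 0` the summand `j` is `F (j + 1) - F j`, so the sum telescopes
  have step (j : ℕ) : max (F j) (u (j + (t + 1))) = F (j + 1) := by
    have hj : u j ≤ F (j + 1) :=
      calc u j ≤ u j + c := le_add_of_nonneg_right hc.le
        _ = u (j + 1 + t) := by rw [← hu]; ring_nf
        _ ≤ F (j + 1) := le_F le_rfl
    calc max (F j) (u (j + (t + 1))) = partialSups (fun s => u (j + s)) (t + 1) :=
          (partialSups_add_one _ t).symm
      _ = max (u j) (F (j + 1)) := by
          rw [partialSups_add_one', Nat.bot_eq_zero, add_zero]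
          simp only [hF, Function.comp_def, add_assoc, Nat.add_comm 1]
      _ = F (j + 1) := max_eq_right hj
  have hFt : F (t + 1) = F 0 + c := by
    simp only [hF, zero_add, add_comm (t + 1), hu, partialSups_add_const]
  calc ∑ j ∈ range (t + 1), max 0 (u (j + (t + 1)) - F j)
      = ∑ j ∈ range (t + 1), (F (j + 1) - F j) :=
        sum_congr rfl fun j _ => by rw [← step, ← max_sub_sub_right, sub_self]
    _ = max 0 c := by rw [sum_range_sub, hFt, add_sub_cancel_left, max_eq_right hc.le]

end OrderedGroup

theorem coe_cycleRange_pow_apply {n : ℕ} {i k : Fin n} (hi : i ≤ k) (j : ℕ) :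
    ((Fin.cycleRange k ^ j) i : ℕ) = (i + j) % (k + 1) := by
  induction j with
  | zero => exact (Nat.mod_eq_of_lt (Nat.lt_succ_of_le hi)).symm
  | succ j ih =>
    have hle : (Fin.cycleRange k ^ j) i ≤ k := by
      rw [Fin.le_def, ih]
      exact Nat.lt_succ_iff.mp (Nat.mod_lt _ k.val.succ_pos)
    rw [pow_succ', Perm.mul_apply, Fin.coe_cycleRange_of_le hle, ← add_assoc,
      ← Nat.mod_add_mod, ← ih]
    split_ifs with h
    · rw [h, Nat.mod_self]
    · exact (Nat.mod_eq_of_lt (Nat.succ_lt_succ (lt_of_le_of_ne hle (Fin.val_ne_of_ne h)))).symm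

section PrefixSum

variable {α : Type*} [AddCommMonoid α] {n : ℕ}

/-- `prefixSum a t = a 0 + ⋯ + a (t - 1)`, where indices `≥ n` contribute `0`. -/
noncomputable def prefixSum (a : Fin n → α) (t : ℕ) : α :=
  ∑ i ∈ range t, Function.extend Fin.val a 0 i

@[simp]
theorem prefixSum_zero (a : Fin n → α) : prefixSum a 0 = 0 :=
  sum_range_zero _

theorem extend_val_apply (a : Fin n → α) {i : ℕ} (hi : i < n) :
    Function.extend Fin.val a 0 i = a ⟨i, hi⟩ :=
  Fin.val_injective.extend_apply a 0 ⟨i, hi⟩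

theorem prefixSum_add_one_eq_sum_Iic (a : Fin n → α) (k : Fin n) :
    prefixSum a (k + 1) = ∑ i ∈ Iic k, a i := by
  rw [prefixSum, Nat.range_succ_eq_Iic, ← Fin.map_valEmbedding_Iic, sum_map]
  exact sum_congr rfl fun i _ => extend_val_apply a i.isLt

theorem partialSups_prefixSum_eq_max_sup' [LinearOrder α] (a : Fin n → α)
    (h : (univ : Finset (Fin n)).Nonempty) :
    partialSups (prefixSum a) n = max 0 (univ.sup' h fun k : Fin n => prefixSum a (k + 1)) := by
  apply le_antisymm
  · refine partialSups_le _ _ _ fun t ht => ?_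
    rcases t with _ | t
    · exact le_max_of_le_left (prefixSum_zero a).le
    · exact le_max_of_le_right (le_sup' (fun k : Fin n => prefixSum a (k + 1)) (mem_univ ⟨t, ht⟩))
  · refine max_le ?_ (sup'_le _ _ fun k _ => le_partialSups_of_le _ k.isLt)
    simpa using le_partialSups_of_le (prefixSum a) (Nat.zero_le n)

theorem prefixSum_comp_cycleRange_pow (a : Fin n → α) (k : Fin n) (j : ℕ) {s : ℕ}
    (hs : s ≤ k + 1) :
    prefixSum (a ∘ ⇑(Fin.cycleRange k ^ j)) s =
      ∑ i ∈ range s, Function.extend Fin.val a 0 ((j + i) % (k + 1)) := by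
  refine sum_congr rfl fun i hi => ?_
  have hik : i < k + 1 := (mem_range.mp hi).trans_le hs
  have hmod : (j + i) % (k + 1) < n := (Nat.mod_lt _ k.val.succ_pos).trans_le k.isLt
  rw [extend_val_apply _ (hik.trans_le k.isLt), extend_val_apply _ hmod, Function.comp_apply]
  congr 1
  ext
  rw [coe_cycleRange_pow_apply (Fin.le_def.mpr (Nat.lt_succ_iff.mp hik)), add_comm]

end PrefixSum

theorem sum_perm_max_zero_sum_eq_card_smul {α ι : Type*} [AddCommMonoid α] [LinearOrder α]
    [Fintype ι] [DecidableEq ι] (x : ι → α) {s : Finset ι} {i₀ : ι} (hi₀ : i₀ ∈ s) :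
    ∑ σ : Perm ι, max 0 (∑ i ∈ s, x (σ i)) =
      #s • ∑ σ : Perm ι, if 0 < ∑ i ∈ s, x (σ i) then x (σ i₀) else 0 := by
  set T : Perm ι → α := fun σ => ∑ i ∈ s, x (σ i)
  have hswap (σ : Perm ι) {i : ι} (hi : i ∈ s) : T (σ * swap i₀ i) = T σ :=
    Perm.sum_comp (swap i₀ i) s (fun i => x (σ i)) fun j hj => by
      rcases (swap_apply_ne_self_iff.mp hj).2 with rfl | rfl <;> assumption
  calc ∑ σ, max 0 (T σ) = ∑ σ, ∑ i ∈ s, if 0 < T σ then x (σ i) else 0 := by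
        refine sum_congr rfl fun σ _ => ?_
        rw [sum_ite_irrel, sum_const_zero]
        split_ifs with h
        exacts [max_eq_right h.le, max_eq_left (not_lt.mp h)]
    _ = ∑ i ∈ s, ∑ σ, if 0 < T σ then x (σ i) else 0 := sum_comm
    _ = ∑ _i ∈ s, ∑ σ, if 0 < T σ then x (σ i₀) else 0 := by
        refine sum_congr rfl fun i hi => ?_
        rw [← Equiv.sum_comp (Equiv.mulRight (swap i₀ i))]
        simp only [coe_mulRight, hswap _ hi, Perm.mul_apply, swap_apply_right]
    _ = #s • ∑ σ, if 0 < T σ then x (σ i₀) else 0 := sum_const _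

section Permutations

variable {α : Type*} [AddCommGroup α] [LinearOrder α] [IsOrderedAddMonoid α] {n : ℕ}

theorem sum_range_partialSups_prefixSum_comp_cycleRange_pow_sub (a : Fin n → α) (k : Fin n) :
    ∑ j ∈ range (k + 1), (partialSups (prefixSum (a ∘ ⇑(Fin.cycleRange k ^ j))) (k + 1) -
      partialSups (prefixSum (a ∘ ⇑(Fin.cycleRange k ^ j))) k) = max 0 (prefixSum a (k + 1)) := by
  set w : ℕ → α := fun i => Function.extend Fin.val a 0 (i % (k + 1))
  set u : ℕ → α := fun t => ∑ i ∈ range t, w i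
  have hperiod (i : ℕ) : u (i + (k + 1)) = u i + u (k + 1) := by
    simp only [u, add_comm i, sum_range_add, add_comm (u i)]
    simp only [w, Nat.add_mod_left]
  have hrot (j : ℕ) {s : ℕ} (hs : s ≤ k + 1) :
      prefixSum (a ∘ ⇑(Fin.cycleRange k ^ j)) s = u (j + s) - u j := by
    simp only [prefixSum_comp_cycleRange_pow a k j hs, u, w, sum_range_add, add_sub_cancel_left]
  have hsum : u (k + 1) = prefixSum a (k + 1) :=
    sum_congr rfl fun i hi => by simp only [w, Nat.mod_eq_of_lt (mem_range.mp hi)]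
  rw [← hsum, ← sum_range_max_zero_sub_partialSups_shift k hperiod]
  refine sum_congr rfl fun j _ => ?_
  have hsup : partialSups (prefixSum (a ∘ ⇑(Fin.cycleRange k ^ j))) k =
      partialSups (fun s => u (j + s)) k - u j := by
    rw [partialSups_congr fun s hs => hrot j (hs.trans k.val.le_succ)]
    simpa only [sub_eq_add_neg] using partialSups_add_const (fun s => u (j + s)) (-u j) k
  rw [partialSups_add_one_sub, hsup, hrot j le_rfl, sub_sub_sub_cancel_right]

theorem card_smul_sum_perm_partialSups_prefixSum_sub (x : Fin n → α) (k : Fin n) :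
    (k + 1 : ℕ) • ∑ σ : Perm (Fin n), (partialSups (prefixSum (x ∘ σ)) (k + 1) -
      partialSups (prefixSum (x ∘ σ)) k) =
      ∑ σ : Perm (Fin n), max 0 (prefixSum (x ∘ σ) (k + 1)) := by
  set D : Perm (Fin n) → α := fun σ =>
    partialSups (prefixSum (x ∘ σ)) (k + 1) - partialSups (prefixSum (x ∘ σ)) k
  calc (k + 1 : ℕ) • ∑ σ, D σ = ∑ j ∈ range (k + 1), ∑ σ, D σ := by rw [sum_const, card_range]
    _ = ∑ j ∈ range (k + 1), ∑ σ, D (σ * Fin.cycleRange k ^ j) :=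
        sum_congr rfl fun j _ => (Equiv.sum_comp (Equiv.mulRight _) D).symm
    _ = ∑ σ, ∑ j ∈ range (k + 1), D (σ * Fin.cycleRange k ^ j) := sum_comm
    _ = ∑ σ : Perm (Fin n), max 0 (prefixSum (x ∘ σ) (k + 1)) :=
        sum_congr rfl fun σ _ => sum_range_partialSups_prefixSum_comp_cycleRange_pow_sub (x ∘ σ) k

theorem sum_perm_partialSups_prefixSum_sub (x : Fin n → α) {i₀ k : Fin n} (hi₀ : i₀ ≤ k) :
    ∑ σ : Perm (Fin n), (partialSups (prefixSum (x ∘ σ)) (k + 1) -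
      partialSups (prefixSum (x ∘ σ)) k) =
      ∑ σ : Perm (Fin n), if 0 < prefixSum (x ∘ σ) (k + 1) then x (σ i₀) else 0 := by
  have hT (σ : Perm (Fin n)) : ∑ i ∈ Iic k, x (σ i) = prefixSum (x ∘ σ) (k + 1) :=
    (prefixSum_add_one_eq_sum_Iic _ k).symm
  have h := sum_perm_max_zero_sum_eq_card_smul x (mem_Iic.mpr hi₀)
  simp only [hT, Fin.card_Iic] at h
  refine nsmul_right_injective k.val.succ_ne_zero ?_
  simp only [card_smul_sum_perm_partialSups_prefixSum_sub, h]

end Permutations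

/-- Lemma of Hunt/Kac/Dyson: for real numbers `x 0, …, x (n-1)` and a permutation `σ`,
with `T k σ = x (σ 0) + ⋯ + x (σ k)` and `M σ = max (0, T 0 σ, …, T (n-1) σ)`,
we have `∑ σ, M σ = ∑ σ, x (σ 0) * #{k : T k σ > 0}`. -/
theorem sum_perm_max_eq_sum_first_mul_card_pos (n : ℕ) (hn : 0 < n) (x : Fin n → ℝ) :
    ∑ σ : Equiv.Perm (Fin n),
        max 0
          (Finset.univ.sup' (Finset.univ_nonempty_iff.mpr ⟨⟨0, hn⟩⟩)
            (fun k : Fin n => ∑ i ∈ Finset.univ.filter (fun i : Fin n => i ≤ k), x (σ i)))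
      = ∑ σ : Equiv.Perm (Fin n),
          x (σ ⟨0, hn⟩) *
            ((Finset.univ.filter (fun k : Fin n =>
                0 < ∑ i ∈ Finset.univ.filter (fun i : Fin n => i ≤ k), x (σ i))).card : ℝ) := by
  have hT (σ : Perm (Fin n)) (k : Fin n) : ∑ i ∈ Iic k, x (σ i) = prefixSum (x ∘ σ) (k + 1) :=
    (prefixSum_add_one_eq_sum_Iic _ k).symm
  simp only [filter_ge_eq_Iic, hT, ← partialSups_prefixSum_eq_max_sup']
  calc ∑ σ : Perm (Fin n), partialSups (prefixSum (x ∘ σ)) n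
      = ∑ k : Fin n, ∑ σ : Perm (Fin n), (partialSups (prefixSum (x ∘ σ)) (k + 1) -
          partialSups (prefixSum (x ∘ σ)) k) := by
        rw [sum_comm]
        exact sum_congr rfl fun σ _ => partialSups_eq_sum_fin_sub (prefixSum_zero _) n
    _ = ∑ k : Fin n, ∑ σ : Perm (Fin n),
          if 0 < prefixSum (x ∘ σ) (k + 1) then x (σ ⟨0, hn⟩) else 0 :=
        sum_congr rfl fun k _ => sum_perm_partialSups_prefixSum_sub x (Nat.zero_le k)
    _ = _ := by
        rw [sum_comm]
        refine sum_congr rfl fun σ _ => ?_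
        rw [← sum_filter, sum_const, nsmul_eq_mul, mul_comm]
end

section
/- Let X_1, X_2, … be independent, identically distributed real-valued random variables with E|X_1| < ∞. Set T_k = X_1 + ⋯ + X_k and M_n = max(0, T_1, …, T_n). Then for every n ≥ 1, E[M_n] = Σ_{k=1}^n E[T_k⁺]/k, where x⁺ = max(x,0). -/
/-!
Write `M n = max (0, T 1, …, T n)` and `A = {T (n+1) > 0}`. Off `A`, `M (n+1) = M n`; on `A` the
maximum is attained at a positive index, so `M (n+1) = X 0 + M' n` with `M'` built from
`X 1, X 2, …`. Permutations of `X 0, …, X n` preserve both the joint law and the event `A`: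
the cyclic shift gives `E[M' n; A] = E[M n; A]`, and the transpositions of `X 0` with `X i` give
`(n+1) E[X 0; A] = E[T (n+1); A] = E[T (n+1)⁺]`. Hence
`E[M (n+1)] = E[M n] + E[T (n+1)⁺] / (n+1)`, and the theorem follows by induction.
-/

open MeasureTheory ProbabilityTheory Finset

namespace ProbabilityTheory

variable {Ω ι β : Type*} [MeasurableSpace Ω] {P : Measure Ω}
  [MeasurableSpace β] {X : ι → Ω → β}

lemma iIndepFun.identDistrib_reindex (hmeas : ∀ i, Measurable (X i)) (hindep : iIndepFun X P)
    {i₀ : ι} (hident : ∀ i, IdentDistrib (X i) (X i₀) P P) {σ : ι → ι}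
    (hσ : Function.Injective σ) :
    IdentDistrib (fun ω i => X (σ i) ω) (fun ω i => X i ω) P P := by
  refine ⟨(measurable_pi_lambda _ fun i => hmeas (σ i)).aemeasurable,
    (measurable_pi_lambda _ hmeas).aemeasurable, ?_⟩
  rw [(hindep.precomp hσ).map_fun_eq_infinitePi_map (fun i => hmeas (σ i)),
    hindep.map_fun_eq_infinitePi_map hmeas]
  simp only [(hident _).map_eq]

lemma iIndepFun.setIntegral_reindex (hmeas : ∀ i, Measurable (X i)) (hindep : iIndepFun X P)
    {i₀ : ι} (hident : ∀ i, IdentDistrib (X i) (X i₀) P P) {σ : ι → ι}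
    (hσ : Function.Injective σ) {S : Set (ι → β)} (hS : MeasurableSet S)
    (hSσ : ∀ y, (y ∘ σ) ∈ S ↔ y ∈ S) {f : (ι → β) → ℝ} (hf : Measurable f) :
    ∫ ω in {ω | (fun i => X i ω) ∈ S}, f (fun i => X (σ i) ω) ∂P
      = ∫ ω in {ω | (fun i => X i ω) ∈ S}, f (fun i => X i ω) ∂P := by
  have h_indicator : ∀ Y : Ω → ι → β, Measurable Y →
      ∫ ω in {ω | Y ω ∈ S}, f (Y ω) ∂P = ∫ ω, S.indicator f (Y ω) ∂P :=
    fun Y hY => (integral_indicator (hS.preimage hY)).symm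
  have hsets : {ω | (fun i => X i ω) ∈ S} = {ω | (fun i => X (σ i) ω) ∈ S} :=
    Set.ext fun ω => (hSσ _).symm
  nth_rw 1 [hsets]
  rw [h_indicator _ (measurable_pi_lambda _ fun i => hmeas (σ i)),
    h_indicator _ (measurable_pi_lambda _ hmeas)]
  exact ((hindep.identDistrib_reindex hmeas hident hσ).comp (hf.indicator hS)).integral_eq

end ProbabilityTheory

/-- The term `k = 0` is the empty sum, so this is `max (0, T 1, …, T n)`
with `T k = ∑ i < k, x i`. -/
def maxPartialSum (x : ℕ → ℝ) (n : ℕ) : ℝ :=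
  (range (n + 1)).sup' nonempty_range_add_one fun k => ∑ i ∈ range k, x i

namespace maxPartialSum

lemma zero (x : ℕ → ℝ) : maxPartialSum x 0 = 0 := by simp [maxPartialSum]

lemma nonneg (x : ℕ → ℝ) (n : ℕ) : 0 ≤ maxPartialSum x n :=
  le_sup'_of_le _ (b := 0) (by simp) (by simp)

lemma eq_max_zero_sup'_Icc (x : ℕ → ℝ) {n : ℕ} (hn : 1 ≤ n) :
    maxPartialSum x n
      = max 0 ((Icc 1 n).sup' (nonempty_Icc.mpr hn) fun k => ∑ i ∈ range k, x i) := by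
  have hrange : range (n + 1) = insert 0 (Icc 1 n) := by
    ext k; simp only [mem_range, mem_insert, mem_Icc]; omega
  rw [maxPartialSum, sup'_congr nonempty_range_add_one hrange fun _ _ => rfl,
    sup'_insert (nonempty_Icc.mpr hn)]
  simp

lemma congr {x y : ℕ → ℝ} {n : ℕ} (h : ∀ i < n, x i = y i) :
    maxPartialSum x n = maxPartialSum y n :=
  sup'_congr _ rfl fun k hk => sum_congr rfl fun i hi => h i (by
    simp only [mem_range] at hk hi; omega)

lemma succ (x : ℕ → ℝ) (n : ℕ) :
    maxPartialSum x (n + 1) = max (maxPartialSum x n) (∑ i ∈ range (n + 1), x i) := by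
  simp only [maxPartialSum, range_add_one (n := n + 1)]
  rw [sup'_insert nonempty_range_add_one, sup_comm]

lemma succ_eq_max_zero_add_shift (x : ℕ → ℝ) (n : ℕ) :
    maxPartialSum x (n + 1) = max 0 (x 0 + maxPartialSum (fun i => x (i + 1)) n) := by
  induction n with
  | zero => simp [succ, zero]
  | succ n ih =>
    rw [succ, ih, succ, sum_range_succ', max_assoc, add_comm _ (x 0), max_add_add_left]

lemma succ_of_sum_nonpos {x : ℕ → ℝ} {n : ℕ} (h : ∑ i ∈ range (n + 1), x i ≤ 0) :
    maxPartialSum x (n + 1) = maxPartialSum x n := by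
  rw [succ, max_eq_left (h.trans (nonneg x n))]

lemma succ_of_sum_pos {x : ℕ → ℝ} {n : ℕ} (h : 0 < ∑ i ∈ range (n + 1), x i) :
    maxPartialSum x (n + 1) = x 0 + maxPartialSum (fun i => x (i + 1)) n := by
  have hpos : 0 < maxPartialSum x (n + 1) := h.trans_le (succ x n ▸ le_max_right _ _)
  rw [succ_eq_max_zero_add_shift] at hpos ⊢
  exact max_eq_right ((lt_max_iff.mp hpos).resolve_left (lt_irrefl 0)).le

end maxPartialSum

section IID

variable {Ω : Type*} [MeasurableSpace Ω] {P : Measure Ω} {X : ℕ → Ω → ℝ}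

lemma measurable_maxPartialSum (n : ℕ) : Measurable fun x : ℕ → ℝ => maxPartialSum x n :=
  Finset.measurable_range_sup'' fun k _ => by fun_prop

lemma integrable_maxPartialSum (hX : ∀ i, Integrable (X i) P) (n : ℕ) :
    Integrable (fun ω => maxPartialSum (fun i => X i ω) n) P := by
  have hsup : (fun ω => maxPartialSum (fun i => X i ω) n)
      = (range (n + 1)).sup' nonempty_range_add_one fun k ω => ∑ i ∈ range k, X i ω :=
    funext fun ω => by rw [Finset.sup'_apply]; rfl
  rw [hsup]
  exact sup'_induction _ _ (p := fun f => Integrable f P) (fun f hf g hg => hf.sup hg)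
    fun k _ => integrable_finsetSum _ fun i _ => hX i

lemma card_mul_setIntegral_head_of_sum_pos (hmeas : ∀ i, Measurable (X i)) (hindep : iIndepFun X P)
    (hident : ∀ i, IdentDistrib (X i) (X 0) P P) (hint : Integrable (X 0) P) (N : ℕ) :
    N * ∫ ω in {ω | 0 < ∑ i ∈ range N, X i ω}, X 0 ω ∂P
      = ∫ ω, max (∑ i ∈ range N, X i ω) 0 ∂P := by
  set s := {ω | 0 < ∑ i ∈ range N, X i ω}
  have hs : MeasurableSet s := measurableSet_lt measurable_const (by fun_prop)
  have hXint : ∀ i, Integrable (X i) P := fun i => (hident i).integrable_iff.mpr hint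
  have h_indicator : (fun ω => max (∑ i ∈ range N, X i ω) 0)
      = s.indicator fun ω => ∑ i ∈ range N, X i ω := by
    funext ω
    by_cases h : 0 < ∑ i ∈ range N, X i ω
    · simp [s, h, h.le]
    · simp [s, h, not_lt.mp h]
  have h_exch : ∀ j ∈ range N, ∫ ω in s, X j ω ∂P = ∫ ω in s, X 0 ω ∂P := by
    intro j hj
    have hsum : ∀ y : ℕ → ℝ, ∑ i ∈ range N, y (Equiv.swap 0 j i) = ∑ i ∈ range N, y i := by
      intro y
      refine (Equiv.swap 0 j).sum_comp _ _ fun i hi => ?_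
      rcases (Equiv.swap_apply_ne_self_iff.mp hi).2 with rfl | rfl
      · exact mem_range.mpr ((Nat.zero_le j).trans_lt (mem_range.mp hj))
      · exact hj
    have h := hindep.setIntegral_reindex hmeas hident (Equiv.swap 0 j).injective
      (S := {y | 0 < ∑ i ∈ range N, y i}) (measurableSet_lt measurable_const (by fun_prop))
      (fun y => by simp only [Set.mem_ofPred_eq, Function.comp_apply, hsum])
      (measurable_pi_apply 0)
    simpa using h
  rw [h_indicator, integral_indicator hs, integral_finsetSum _ fun i _ => (hXint i).integrableOn,
    sum_congr rfl h_exch, sum_const, card_range, nsmul_eq_mul]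

lemma setIntegral_maxPartialSum_shift (hmeas : ∀ i, Measurable (X i)) (hindep : iIndepFun X P)
    (hident : ∀ i, IdentDistrib (X i) (X 0) P P) (n : ℕ) :
    ∫ ω in {ω | 0 < ∑ i ∈ range (n + 1), X i ω}, maxPartialSum (fun i => X (i + 1) ω) n ∂P
      = ∫ ω in {ω | 0 < ∑ i ∈ range (n + 1), X i ω}, maxPartialSum (fun i => X i ω) n ∂P := by
  -- the cycle `0 ↦ 1 ↦ ⋯ ↦ n ↦ 0`
  let σ : ℕ → ℕ := fun i => if i < n then i + 1 else if i = n then 0 else i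
  have hσ : σ.Injective := by
    intro a b h
    simp only [σ] at h
    split_ifs at h <;> omega
  have hsum : ∀ y : ℕ → ℝ, ∑ i ∈ range (n + 1), y (σ i) = ∑ i ∈ range (n + 1), y i := by
    intro y
    rw [sum_range_succ, sum_range_succ']
    simp only [σ, lt_irrefl, if_false, if_true]
    congr 1
    exact sum_congr rfl fun i hi => by rw [if_pos (mem_range.mp hi)]
  have h := hindep.setIntegral_reindex hmeas hident hσ
    (S := {y | 0 < ∑ i ∈ range (n + 1), y i}) (measurableSet_lt measurable_const (by fun_prop))
    (fun y => by simp only [Set.mem_ofPred_eq, Function.comp_apply, hsum])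
    (measurable_maxPartialSum n)
  refine Eq.trans (setIntegral_congr_fun ?_ fun ω _ => maxPartialSum.congr ?_) h
  · exact measurableSet_lt measurable_const (by fun_prop)
  · intro i hi
    simp only [σ, if_pos hi]

lemma integral_maxPartialSum_succ (hmeas : ∀ i, Measurable (X i)) (hindep : iIndepFun X P)
    (hident : ∀ i, IdentDistrib (X i) (X 0) P P) (hint : Integrable (X 0) P) (n : ℕ) :
    ∫ ω, maxPartialSum (fun i => X i ω) (n + 1) ∂P
      = ∫ ω, maxPartialSum (fun i => X i ω) n ∂P
        + (∫ ω, max (∑ i ∈ range (n + 1), X i ω) 0 ∂P) / (n + 1) := by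
  set s := {ω | 0 < ∑ i ∈ range (n + 1), X i ω}
  have hs : MeasurableSet s := measurableSet_lt measurable_const (by fun_prop)
  have hXint : ∀ i, Integrable (X i) P := fun i => (hident i).integrable_iff.mpr hint
  have hM : ∀ k, Integrable (fun ω => maxPartialSum (fun i => X i ω) k) P :=
    integrable_maxPartialSum hXint
  have h_pos : ∫ ω in s, maxPartialSum (fun i => X i ω) (n + 1) ∂P
      = ∫ ω in s, X 0 ω ∂P + ∫ ω in s, maxPartialSum (fun i => X i ω) n ∂P := by
    rw [setIntegral_congr_fun hs fun ω hω => maxPartialSum.succ_of_sum_pos hω,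
      integral_add (hXint 0).integrableOn
        (integrable_maxPartialSum (fun i => hXint (i + 1)) n).integrableOn,
      setIntegral_maxPartialSum_shift hmeas hindep hident]
  have h_nonpos : ∫ ω in sᶜ, maxPartialSum (fun i => X i ω) (n + 1) ∂P
      = ∫ ω in sᶜ, maxPartialSum (fun i => X i ω) n ∂P :=
    setIntegral_congr_fun hs.compl fun ω hω => maxPartialSum.succ_of_sum_nonpos (not_lt.mp hω)
  have h_first :
      ∫ ω in s, X 0 ω ∂P = (∫ ω, max (∑ i ∈ range (n + 1), X i ω) 0 ∂P) / (n + 1) := by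
    rw [eq_div_iff (by positivity), mul_comm]
    exact_mod_cast card_mul_setIntegral_head_of_sum_pos hmeas hindep hident hint (n + 1)
  rw [← integral_add_compl hs (hM (n + 1)), ← integral_add_compl hs (hM n), h_pos, h_nonpos,
    h_first]
  ring

lemma integral_maxPartialSum (hmeas : ∀ i, Measurable (X i)) (hindep : iIndepFun X P)
    (hident : ∀ i, IdentDistrib (X i) (X 0) P P) (hint : Integrable (X 0) P) (n : ℕ) :
    ∫ ω, maxPartialSum (fun i => X i ω) n ∂P
      = ∑ k ∈ Icc 1 n, (∫ ω, max (∑ i ∈ range k, X i ω) 0 ∂P) / k := by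
  induction n with
  | zero => simp [maxPartialSum.zero]
  | succ n ih =>
    rw [integral_maxPartialSum_succ hmeas hindep hident hint, ih, sum_Icc_succ_top (by omega),
      Nat.cast_add_one]

end IID

theorem expectation_max_partial_sums_general {Ω : Type*} [MeasurableSpace Ω]
    (P : Measure Ω)
    (X : ℕ → Ω → ℝ)
    (hmeas : ∀ i, Measurable (X i))
    (hindep : iIndepFun X P)
    (hident : ∀ i, IdentDistrib (X i) (X 0) P P)
    (hint : Integrable (X 0) P)
    (n : ℕ) (hn : 1 ≤ n) :
    (∫ ω, max 0 ((Finset.Icc 1 n).sup' (Finset.nonempty_Icc.mpr hn)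
        (fun k => ∑ i ∈ Finset.range k, X i ω)) ∂P)
      = ∑ k ∈ Finset.Icc 1 n,
          (∫ ω, max (∑ i ∈ Finset.range k, X i ω) 0 ∂P) / (k : ℝ) := by
  have h_lhs : (fun ω => max 0 ((Icc 1 n).sup' (nonempty_Icc.mpr hn)
      fun k => ∑ i ∈ range k, X i ω)) = fun ω => maxPartialSum (fun i => X i ω) n :=
    funext fun ω => (maxPartialSum.eq_max_zero_sup'_Icc _ hn).symm
  rw [h_lhs]
  exact integral_maxPartialSum hmeas hindep hident hint n

/-- For i.i.d. integrable real random variables `X 0, X 1, …` with partial sums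
`T k = X 0 + ⋯ + X (k-1)` and `M n = max (0, T 1, …, T n)`, one has
`E[M n] = ∑_{k=1}^n E[T k⁺] / k`. -/
theorem expectation_max_partial_sums {Ω : Type*} [MeasurableSpace Ω]
    (P : Measure Ω) [IsProbabilityMeasure P]
    (X : ℕ → Ω → ℝ)
    (hmeas : ∀ i, Measurable (X i))
    (hindep : iIndepFun X P)
    (hident : ∀ i, IdentDistrib (X i) (X 0) P P)
    (hint : Integrable (X 0) P)
    (n : ℕ) (hn : 1 ≤ n) :
    (∫ ω, max 0 ((Finset.Icc 1 n).sup' (Finset.nonempty_Icc.mpr hn)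
        (fun k => ∑ i ∈ Finset.range k, X i ω)) ∂P)
      = ∑ k ∈ Finset.Icc 1 n,
          (∫ ω, max (∑ i ∈ Finset.range k, X i ω) 0 ∂P) / (k : ℝ) :=
  expectation_max_partial_sums_general P X hmeas hindep hident hint n hn
end

section
/- Suppose E‖Z_1‖ < ∞ and set μ = E[Z_1]. Then n^{-1} E[L_n] → 2‖μ‖ as n → ∞. -/
open MeasureTheory ProbabilityTheory Filter
open scoped RealInnerProductSpace

/-- The unit vector `(cos θ, sin θ)` in the plane. -/
noncomputable def dir (θ : ℝ) : EuclideanSpace ℝ (Fin 2) :=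
  (EuclideanSpace.equiv (Fin 2) ℝ).symm ![Real.cos θ, Real.sin θ]

/-- The random walk with increments `Z`: `walk Z n ω = Z 0 ω + ⋯ + Z (n-1) ω`. -/
noncomputable def walk {Ω : Type*} (Z : ℕ → Ω → EuclideanSpace ℝ (Fin 2)) (n : ℕ) (ω : Ω) :
    EuclideanSpace ℝ (Fin 2) :=
  ∑ i ∈ Finset.range n, Z i ω

/-- Perimeter length of the convex hull of `S 0, …, S n`, via Cauchy's formula. -/
noncomputable def perim {Ω : Type*} (Z : ℕ → Ω → EuclideanSpace ℝ (Fin 2)) (n : ℕ) (ω : Ω) : ℝ :=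
  ∫ θ in (0:ℝ)..Real.pi,
    (((Finset.range (n+1)).sup' Finset.nonempty_range_add_one
        (fun i => ⟪walk Z i ω, dir θ⟫))
      - ((Finset.range (n+1)).inf' Finset.nonempty_range_add_one
        (fun i => ⟪walk Z i ω, dir θ⟫)))

/-!
By Cauchy's formula, `L_n ≥ ∫₀^π |⟪S_n, e_θ⟫| dθ = 2‖S_n‖`, so `E L_n ≥ 2‖E S_n‖ = 2n‖μ‖`.
Conversely, the width of `S_0, …, S_n` in direction `e_θ` is at most `n |⟪μ, e_θ⟫| + 2 D_n`
with `D_n = max_{i ≤ n} ‖S_i - i μ‖`, so `L_n ≤ 2n‖μ‖ + 2π D_n`. By the strong law of large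
numbers `D_n / n → 0` almost surely, and `D_n / n ≤ n⁻¹ ∑_{j < n} ‖Z_j‖ + ‖μ‖`, where the right
side converges in `L¹`, again by the strong law; Vitali's convergence theorem then gives
`E D_n / n → 0`.
-/

open Finset
open scoped Real Topology ENNReal

section Width

variable {E : Type*} [NormedAddCommGroup E] [InnerProductSpace ℝ E]

noncomputable def width (x : ℕ → E) (n : ℕ) (u : E) : ℝ :=
  (range (n + 1)).sup' nonempty_range_add_one (fun i => ⟪x i, u⟫) -
    (range (n + 1)).inf' nonempty_range_add_one (fun i => ⟪x i, u⟫)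

lemma continuous_width (n : ℕ) : Continuous (fun p : (ℕ → E) × E => width p.1 n p.2) := by
  have h : ∀ i, Continuous (fun p : (ℕ → E) × E => ⟪p.1 i, p.2⟫) := fun i =>
    ((continuous_apply i).comp continuous_fst).inner continuous_snd
  exact (Continuous.finset_sup'_apply _ fun i _ => h i).sub
    (Continuous.finset_inf'_apply _ fun i _ => h i)

lemma abs_inner_sub_le_width {x : ℕ → E} {n i j : ℕ} (hi : i ≤ n) (hj : j ≤ n) (u : E) :
    |⟪x i - x j, u⟫| ≤ width x n u := by
  have hsup := fun k (hk : k ≤ n) =>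
    le_sup' (fun i => ⟪x i, u⟫) (mem_range_succ_iff.2 hk)
  have hinf := fun k (hk : k ≤ n) =>
    inf'_le (fun i => ⟪x i, u⟫) (mem_range_succ_iff.2 hk)
  rw [inner_sub_left, abs_le, width]
  constructor <;> linarith [hsup i hi, hsup j hj, hinf i hi, hinf j hj]

noncomputable def maxDev (x : ℕ → E) (μ : E) (n : ℕ) : ℝ :=
  (range (n + 1)).sup' nonempty_range_add_one (fun i => ‖x i - (i : ℝ) • μ‖)

lemma norm_sub_smul_le_maxDev (x : ℕ → E) (μ : E) {n i : ℕ} (hi : i ≤ n) :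
    ‖x i - (i : ℝ) • μ‖ ≤ maxDev x μ n :=
  le_sup' (fun i => ‖x i - (i : ℝ) • μ‖) (mem_range_succ_iff.2 hi)

lemma maxDev_nonneg (x : ℕ → E) (μ : E) (n : ℕ) : 0 ≤ maxDev x μ n :=
  (norm_nonneg _).trans (norm_sub_smul_le_maxDev x μ n.zero_le)

lemma width_le (x : ℕ → E) (μ : E) (n : ℕ) {u : E} (hu : ‖u‖ ≤ 1) :
    width x n u ≤ n * |⟪μ, u⟫| + 2 * maxDev x μ n := by
  obtain ⟨i, hi, hi_eq⟩ := exists_mem_eq_sup' nonempty_range_add_one (fun i => ⟪x i, u⟫)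
  obtain ⟨j, hj, hj_eq⟩ := exists_mem_eq_inf' nonempty_range_add_one (fun i => ⟪x i, u⟫)
  rw [mem_range_succ_iff] at hi hj
  have hdev : ∀ k ≤ n, |⟪x k - (k : ℝ) • μ, u⟫| ≤ maxDev x μ n := fun k hk =>
    (abs_real_inner_le_norm _ _).trans <|
      (mul_le_of_le_one_right (norm_nonneg _) hu).trans (norm_sub_smul_le_maxDev x μ hk)
  -- `⟪x i - x j, u⟫` is `(i - j) ⟪μ, u⟫` up to two deviations from the line `k ↦ k • μ`
  have hdrift : ((i : ℝ) - j) * ⟪μ, u⟫ ≤ n * |⟪μ, u⟫| := by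
    refine (le_abs_self _).trans ?_
    rw [abs_mul]
    gcongr
    rw [abs_le]
    constructor <;> linarith [(Nat.cast_le (α := ℝ)).2 hi, (Nat.cast_le (α := ℝ)).2 hj,
      (Nat.cast_nonneg i : (0 : ℝ) ≤ i), (Nat.cast_nonneg j : (0 : ℝ) ≤ j)]
  have hi' := abs_le.1 (hdev i hi)
  have hj' := abs_le.1 (hdev j hj)
  simp only [inner_sub_left, real_inner_smul_left] at hi' hj'
  rw [width, hi_eq, hj_eq]
  linarith [hi'.2, hj'.1]

end Width

section Plane

open Real

@[fun_prop]
lemma continuous_dir : Continuous dir :=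
  (EuclideanSpace.equiv (Fin 2) ℝ).symm.continuous.comp <|
    continuous_pi fun i => by fin_cases i <;> simp <;> fun_prop

lemma norm_dir (θ : ℝ) : ‖dir θ‖ = 1 := by
  simp [EuclideanSpace.norm_eq, Fin.sum_univ_two, dir]

lemma inner_dir (v : EuclideanSpace ℝ (Fin 2)) (θ : ℝ) :
    ⟪v, dir θ⟫ = v 0 * cos θ + v 1 * sin θ := by
  simp [PiLp.inner_apply, Fin.sum_univ_two, dir]
  ring

lemma exists_inner_dir_eq_norm_mul_sin (v : EuclideanSpace ℝ (Fin 2)) :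
    ∃ ψ, ∀ θ, ⟪v, dir θ⟫ = ‖v‖ * sin (θ + ψ) := by
  set z : ℂ := ⟨v 1, v 0⟩
  have hz : ‖z‖ = ‖v‖ := by
    rw [Complex.norm_def, Complex.normSq_mk, EuclideanSpace.norm_eq, Fin.sum_univ_two]
    simp only [Real.norm_eq_abs, sq_abs]
    ring_nf
  refine ⟨Complex.arg z, fun θ => ?_⟩
  rw [inner_dir, sin_add, ← hz, mul_add, mul_left_comm, mul_left_comm _ (cos θ),
    Complex.norm_mul_cos_arg, Complex.norm_mul_sin_arg]
  ring

lemma integral_abs_sin_add (ψ : ℝ) : ∫ θ in (0 : ℝ)..π, |sin (θ + ψ)| = 2 := by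
  have hper : Function.Periodic (fun x => |sin x|) π := fun x => by simp [sin_add_pi]
  rw [intervalIntegral.integral_comp_add_right (fun x => |sin x|), zero_add, add_comm π,
    hper.intervalIntegral_add_eq ψ 0, zero_add,
    intervalIntegral.integral_congr (g := sin) fun x hx => abs_of_nonneg <|
      sin_nonneg_of_nonneg_of_le_pi (Set.uIcc_of_le pi_pos.le ▸ hx).1
        (Set.uIcc_of_le pi_pos.le ▸ hx).2,
    integral_sin]
  norm_num

lemma integral_abs_inner_dir (v : EuclideanSpace ℝ (Fin 2)) :
    ∫ θ in (0 : ℝ)..π, |⟪v, dir θ⟫| = 2 * ‖v‖ := by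
  obtain ⟨ψ, hψ⟩ := exists_inner_dir_eq_norm_mul_sin v
  simp_rw [hψ, abs_mul, abs_norm]
  rw [intervalIntegral.integral_const_mul, integral_abs_sin_add, mul_comm]

end Plane

section Perimeter

variable {Ω : Type*} (Z : ℕ → Ω → EuclideanSpace ℝ (Fin 2))

lemma walk_zero (ω : Ω) : walk Z 0 ω = 0 := by simp [walk]

lemma perim_eq_integral_width (n : ℕ) (ω : Ω) :
    perim Z n ω = ∫ θ in (0 : ℝ)..π, width (walk Z · ω) n (dir θ) := rfl

lemma continuous_width_dir (x : ℕ → EuclideanSpace ℝ (Fin 2)) (n : ℕ) :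
    Continuous fun θ => width x n (dir θ) :=
  (continuous_width n).comp (continuous_const.prodMk continuous_dir)

lemma two_mul_norm_walk_le_perim (n : ℕ) (ω : Ω) : 2 * ‖walk Z n ω‖ ≤ perim Z n ω := by
  rw [← integral_abs_inner_dir, perim_eq_integral_width]
  refine intervalIntegral.integral_mono_on Real.pi_pos.le
    ((by fun_prop : Continuous _).intervalIntegrable _ _)
    ((continuous_width_dir _ n).intervalIntegrable _ _) fun θ _ => ?_
  simpa [walk_zero] using abs_inner_sub_le_width (x := (walk Z · ω)) le_rfl n.zero_le (dir θ)

lemma perim_nonneg (n : ℕ) (ω : Ω) : 0 ≤ perim Z n ω :=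
  (by positivity : (0 : ℝ) ≤ 2 * ‖walk Z n ω‖).trans (two_mul_norm_walk_le_perim Z n ω)

lemma perim_le (μ : EuclideanSpace ℝ (Fin 2)) (n : ℕ) (ω : Ω) :
    perim Z n ω ≤ 2 * n * ‖μ‖ + 2 * π * maxDev (walk Z · ω) μ n :=
  calc perim Z n ω ≤ ∫ θ in (0 : ℝ)..π, (n * |⟪μ, dir θ⟫| + 2 * maxDev (walk Z · ω) μ n) :=
        intervalIntegral.integral_mono_on Real.pi_pos.le
          ((continuous_width_dir _ n).intervalIntegrable _ _)
          ((by fun_prop : Continuous _).intervalIntegrable _ _)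
          fun θ _ => width_le _ μ n (norm_dir θ).le
    _ = 2 * n * ‖μ‖ + 2 * π * maxDev (walk Z · ω) μ n := by
        rw [intervalIntegral.integral_add ((by fun_prop : Continuous _).intervalIntegrable _ _)
            intervalIntegrable_const,
          intervalIntegral.integral_const_mul, integral_abs_inner_dir,
          intervalIntegral.integral_const, smul_eq_mul]
        ring

lemma maxDev_walk_le (μ : EuclideanSpace ℝ (Fin 2)) (n : ℕ) (ω : Ω) :
    maxDev (walk Z · ω) μ n ≤ ∑ j ∈ range n, ‖Z j ω‖ + n * ‖μ‖ := by
  refine sup'_le _ _ fun i hi => ?_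
  have hin : i ≤ n := mem_range_succ_iff.1 hi
  calc ‖walk Z i ω - (i : ℝ) • μ‖ ≤ ‖walk Z i ω‖ + i * ‖μ‖ := by
        simpa [norm_smul] using norm_sub_le (walk Z i ω) ((i : ℝ) • μ)
    _ ≤ ∑ j ∈ range n, ‖Z j ω‖ + n * ‖μ‖ := by
        gcongr
        exact (norm_sum_le _ _).trans <| sum_le_sum_of_subset_of_nonneg
          (range_subset_range.2 hin) fun j _ _ => norm_nonneg _

end Perimeter

lemma tendsto_sup'_range_div_atTop_zero {u : ℕ → ℝ} (hu : ∀ i, 0 ≤ u i)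
    (h : Tendsto (fun i : ℕ => u i / i) atTop (𝓝 0)) :
    Tendsto (fun n : ℕ => (range (n + 1)).sup' nonempty_range_add_one u / n) atTop (𝓝 0) := by
  set M := fun n : ℕ => (range (n + 1)).sup' nonempty_range_add_one u
  have hM : ∀ n, 0 ≤ M n := fun n => (hu 0).trans (le_sup' u (by simp))
  refine tendsto_order.2 ⟨fun a ha => Eventually.of_forall fun n =>
    ha.trans_le (div_nonneg (hM n) n.cast_nonneg), fun ε hε => ?_⟩
  obtain ⟨N, hN⟩ := eventually_atTop.1 ((tendsto_order.1 h).2 (ε / 2) (half_pos hε))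
  -- beyond `N` every `u i` is below `ε i / 2`; the finitely many earlier ones are below `M N`
  have hsplit : ∀ n, M n ≤ M N + ε / 2 * n := by
    refine fun n => sup'_le _ _ fun i hi => ?_
    have hin : (i : ℝ) ≤ n := Nat.cast_le.2 (mem_range_succ_iff.1 hi)
    rcases le_or_gt i N with hiN | hNi
    · linarith [le_sup' u (mem_range_succ_iff.2 hiN), (by positivity : 0 ≤ ε / 2 * n)]
    · have hi0 : (0 : ℝ) < i := Nat.cast_pos.2 (N.zero_le.trans_lt hNi)
      have := (div_lt_iff₀ hi0).1 (hN i hNi.le)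
      nlinarith [hM N, mul_le_mul_of_nonneg_left hin (half_pos hε).le]
  filter_upwards [(tendsto_order.1 (tendsto_const_div_atTop_nhds_zero_nat (M N))).2 (ε / 2)
    (half_pos hε), eventually_gt_atTop 0] with n hn hn0
  calc M n / n ≤ (M N + ε / 2 * n) / n := by gcongr; exact hsplit n
    _ = M N / n + ε / 2 := by field_simp
    _ < ε := by linarith

section DominatedConvergence

variable {α ι β γ G : Type*} {m : MeasurableSpace α} {μ : Measure α}
  [NormedAddCommGroup β] [NormedAddCommGroup γ] [NormedAddCommGroup G] [NormedSpace ℝ G]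

lemma MeasureTheory.UnifIntegrable.of_norm_le {p : ℝ≥0∞} {f : ι → α → β} {g : ι → α → γ}
    (hg : UnifIntegrable g p μ) (hfg : ∀ i x, ‖f i x‖ ≤ ‖g i x‖) : UnifIntegrable f p μ := by
  intro ε hε
  obtain ⟨δ, hδ, h⟩ := hg hε
  refine ⟨δ, hδ, fun i s hs hμs => (eLpNorm_mono fun x => ?_).trans (h i s hs hμs)⟩
  by_cases hx : x ∈ s <;> simp [hx, hfg]

/-- Vitali's form of dominated convergence: the dominating functions may vary, provided they
converge in `L¹`. -/
theorem tendsto_integral_of_norm_le_of_tendsto_L1 [IsFiniteMeasure μ]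
    {f : ℕ → α → G} {f₀ : α → G} {g : ℕ → α → γ} {g₀ : α → γ}
    (hf : ∀ n, AEStronglyMeasurable (f n) μ) (hf₀ : Integrable f₀ μ)
    (hff₀ : ∀ᵐ x ∂μ, Tendsto (fun n => f n x) atTop (𝓝 (f₀ x)))
    (hg : ∀ n, Integrable (g n) μ) (hg₀ : Integrable g₀ μ)
    (hgg₀ : Tendsto (fun n => eLpNorm (g n - g₀) 1 μ) atTop (𝓝 0))
    (hfg : ∀ n x, ‖f n x‖ ≤ ‖g n x‖) :
    Tendsto (fun n => ∫ x, f n x ∂μ) atTop (𝓝 (∫ x, f₀ x ∂μ)) := by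
  have hgUI : UnifIntegrable g 1 μ := unifIntegrable_of_tendsto_Lp le_rfl ENNReal.one_ne_top
    (fun n => memLp_one_iff_integrable.2 (hg n)) (memLp_one_iff_integrable.2 hg₀) hgg₀
  exact tendsto_integral_of_L1' f₀ hf₀.aestronglyMeasurable
    (Eventually.of_forall fun n => (hg n).mono (hf n) (ae_of_all _ (hfg n)))
    (tendsto_Lp_finite_of_tendsto_ae le_rfl ENNReal.one_ne_top hf
      (memLp_one_iff_integrable.2 hf₀) (hgUI.of_norm_le hfg) hff₀)

end DominatedConvergence

section RandomWalk

variable {Ω : Type*} [MeasurableSpace Ω] {P : Measure Ω} {Z : ℕ → Ω → EuclideanSpace ℝ (Fin 2)}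

lemma measurable_walk (hmeas : ∀ i, Measurable (Z i)) (n : ℕ) : Measurable (walk Z n) :=
  Finset.measurable_sum _ fun i _ => hmeas i

lemma measurable_perim (hmeas : ∀ i, Measurable (Z i)) (n : ℕ) : Measurable (perim Z n) := by
  have hcont : Continuous fun x : ℕ → EuclideanSpace ℝ (Fin 2) =>
      ∫ θ in (0 : ℝ)..π, width x n (dir θ) :=
    intervalIntegral.continuous_parametric_intervalIntegral_of_continuous'
      (f := fun x θ => width x n (dir θ))
      ((continuous_width n).comp (continuous_fst.prodMk (continuous_dir.comp continuous_snd))) _ _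
  exact hcont.measurable.comp (measurable_pi_lambda _ fun i => measurable_walk hmeas i)

lemma measurable_maxDev_walk (hmeas : ∀ i, Measurable (Z i)) (μ : EuclideanSpace ℝ (Fin 2))
    (n : ℕ) : Measurable fun ω => maxDev (walk Z · ω) μ n :=
  measurable_range_sup'' fun i _ => ((measurable_walk hmeas i).sub_const _).norm

lemma integrable_maxDev_walk [IsFiniteMeasure P] (hmeas : ∀ i, Measurable (Z i))
    (hZ : ∀ i, Integrable (Z i) P) (μ : EuclideanSpace ℝ (Fin 2)) (n : ℕ) :
    Integrable (fun ω => maxDev (walk Z · ω) μ n) P :=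
  ((integrable_finsetSum _ fun j _ => (hZ j).norm).add (integrable_const _)).mono'
    (measurable_maxDev_walk hmeas μ n).aestronglyMeasurable
    (ae_of_all _ fun ω => by
      simpa [abs_of_nonneg (maxDev_nonneg _ μ n)] using maxDev_walk_le Z μ n ω)

lemma integrable_perim [IsFiniteMeasure P] (hmeas : ∀ i, Measurable (Z i))
    (hZ : ∀ i, Integrable (Z i) P) (n : ℕ) :
    Integrable (perim Z n) P :=
  ((integrable_maxDev_walk hmeas hZ 0 n).const_mul (2 * π)).mono'
    (measurable_perim hmeas n).aestronglyMeasurable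
    (ae_of_all _ fun ω => by
      simpa [abs_of_nonneg (perim_nonneg Z n ω)] using perim_le Z 0 n ω)

lemma integral_walk (hZ : ∀ i, Integrable (Z i) P)
    (hident : ∀ i, IdentDistrib (Z i) (Z 0) P P) (n : ℕ) :
    ∫ ω, walk Z n ω ∂P = (n : ℝ) • ∫ ω, Z 0 ω ∂P := by
  simp only [walk]
  rw [integral_finsetSum _ fun i _ => hZ i]
  simp [fun i => (hident i).integral_eq, ← Nat.cast_smul_eq_nsmul ℝ]

lemma mul_norm_integral_le_integral_perim [IsFiniteMeasure P] (hmeas : ∀ i, Measurable (Z i))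
    (hZ : ∀ i, Integrable (Z i) P) (hident : ∀ i, IdentDistrib (Z i) (Z 0) P P) (n : ℕ) :
    2 * n * ‖∫ ω, Z 0 ω ∂P‖ ≤ ∫ ω, perim Z n ω ∂P :=
  calc 2 * n * ‖∫ ω, Z 0 ω ∂P‖ = 2 * ‖∫ ω, walk Z n ω ∂P‖ := by
        rw [integral_walk hZ hident, norm_smul, Real.norm_natCast, mul_assoc]
    _ ≤ ∫ ω, 2 * ‖walk Z n ω‖ ∂P := by
        rw [integral_const_mul]
        gcongr
        exact norm_integral_le_integral_norm _
    _ ≤ ∫ ω, perim Z n ω ∂P :=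
        integral_mono ((integrable_finsetSum _ fun i _ => hZ i).norm.const_mul 2)
          (integrable_perim hmeas hZ n) (two_mul_norm_walk_le_perim Z n)

lemma integral_perim_le [IsProbabilityMeasure P] (hmeas : ∀ i, Measurable (Z i))
    (hZ : ∀ i, Integrable (Z i) P) (μ : EuclideanSpace ℝ (Fin 2)) (n : ℕ) :
    ∫ ω, perim Z n ω ∂P ≤ 2 * n * ‖μ‖ + 2 * π * ∫ ω, maxDev (walk Z · ω) μ n ∂P := by
  have hdev := integrable_maxDev_walk hmeas hZ μ n
  calc ∫ ω, perim Z n ω ∂P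
      ≤ ∫ ω, (2 * n * ‖μ‖ + 2 * π * maxDev (walk Z · ω) μ n) ∂P :=
        integral_mono (integrable_perim hmeas hZ n) ((integrable_const _).add (hdev.const_mul _))
          (perim_le Z μ n)
    _ = 2 * n * ‖μ‖ + 2 * π * ∫ ω, maxDev (walk Z · ω) μ n ∂P := by
        rw [integral_add (integrable_const _) (hdev.const_mul _), integral_const_mul (2 * π)]
        simp

lemma ae_tendsto_maxDev_walk_div [IsProbabilityMeasure P] (hZ : Integrable (Z 0) P)
    (hindep : Pairwise fun i j => IndepFun (Z i) (Z j) P)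
    (hident : ∀ i, IdentDistrib (Z i) (Z 0) P P) :
    ∀ᵐ ω ∂P, Tendsto (fun n : ℕ => maxDev (walk Z · ω) (∫ ω, Z 0 ω ∂P) n / n) atTop (𝓝 0) := by
  filter_upwards [strong_law_ae Z hZ hindep hident] with ω hω
  refine tendsto_sup'_range_div_atTop_zero (fun i => norm_nonneg _) <|
    (tendsto_iff_norm_sub_tendsto_zero.1 hω).congr' ?_
  filter_upwards [eventually_gt_atTop 0] with i hi
  have hi : (i : ℝ) ≠ 0 := Nat.cast_ne_zero.2 hi.ne'
  have hscale : walk Z i ω - (i : ℝ) • ∫ ω, Z 0 ω ∂P =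
      (i : ℝ) • ((i : ℝ)⁻¹ • walk Z i ω - ∫ ω, Z 0 ω ∂P) := by
    rw [smul_sub, smul_inv_smul₀ hi]
  rw [hscale, norm_smul, Real.norm_natCast, mul_div_cancel_left₀ _ hi]
  rfl

lemma tendsto_integral_maxDev_walk_div [IsProbabilityMeasure P] (hmeas : ∀ i, Measurable (Z i))
    (hZ : ∀ i, Integrable (Z i) P) (hindep : Pairwise fun i j => IndepFun (Z i) (Z j) P)
    (hident : ∀ i, IdentDistrib (Z i) (Z 0) P P) :
    Tendsto (fun n : ℕ => ∫ ω, maxDev (walk Z · ω) (∫ ω, Z 0 ω ∂P) n / n ∂P) atTop (𝓝 0) := by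
  set μ := ∫ ω, Z 0 ω ∂P
  have hL1 := strong_law_Lp le_rfl ENNReal.one_ne_top (fun j ω => ‖Z j ω‖)
    (memLp_one_iff_integrable.2 (hZ 0).norm)
    (fun i j hij => (hindep hij).comp measurable_norm measurable_norm)
    (fun i => (hident i).comp measurable_norm)
  have hdom : ∀ (n : ℕ) ω, ‖maxDev (walk Z · ω) μ n / n‖ ≤
      ‖(n : ℝ)⁻¹ * ∑ j ∈ range n, ‖Z j ω‖ + ‖μ‖‖ := by
    intro n ω
    rw [Real.norm_of_nonneg (div_nonneg (maxDev_nonneg _ μ n) n.cast_nonneg),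
      Real.norm_of_nonneg (by positivity)]
    rcases n.eq_zero_or_pos with rfl | hn
    · simp
    · have hn : (0 : ℝ) < n := Nat.cast_pos.2 hn
      rw [div_le_iff₀ hn]
      refine (maxDev_walk_le Z μ n ω).trans_eq ?_
      field_simp
  simpa using tendsto_integral_of_norm_le_of_tendsto_L1 (f₀ := 0)
    (g := fun n ω => (n : ℝ)⁻¹ * ∑ j ∈ range n, ‖Z j ω‖ + ‖μ‖)
    (g₀ := fun _ => (∫ ω, ‖Z 0 ω‖ ∂P) + ‖μ‖)
    (fun n => ((measurable_maxDev_walk hmeas μ n).div_const _).aestronglyMeasurable)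
    (integrable_zero _ _ _) (ae_tendsto_maxDev_walk_div (hZ 0) hindep hident)
    (fun n => ((integrable_finsetSum _ fun j _ => (hZ j).norm).const_mul _).add
      (integrable_const _))
    (integrable_const _)
    (hL1.congr fun n => by congr 1; ext ω; simp only [Pi.sub_apply, smul_eq_mul]; ring) hdom

end RandomWalk

/-- First-order asymptotics for the expected perimeter length:
`n⁻¹ E[L n] → 2‖μ‖` where `μ = E[Z 1]`. -/
theorem expected_perimeter_asymptotics {Ω : Type*} [MeasurableSpace Ω]
    (P : Measure Ω) [IsProbabilityMeasure P]
    (Z : ℕ → Ω → EuclideanSpace ℝ (Fin 2))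
    (hmeas : ∀ i, Measurable (Z i))
    (hindep : iIndepFun Z P)
    (hident : ∀ i, IdentDistrib (Z i) (Z 0) P P)
    (hint : Integrable (fun ω => ‖Z 0 ω‖) P) :
    Tendsto (fun n : ℕ => (∫ ω, perim Z n ω ∂P) / (n : ℝ)) atTop
      (nhds (2 * ‖∫ ω, Z 0 ω ∂P‖)) := by
  set μ := ∫ ω, Z 0 ω ∂P
  have hZ : ∀ i, Integrable (Z i) P := fun i =>
    (hident i).integrable_iff.2 ((integrable_norm_iff (hmeas 0).aestronglyMeasurable).1 hint)
  have hdev : Tendsto (fun n : ℕ => 2 * ‖μ‖ + 2 * π * ∫ ω, maxDev (walk Z · ω) μ n / n ∂P)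
      atTop (𝓝 (2 * ‖μ‖)) := by
    simpa using ((tendsto_integral_maxDev_walk_div hmeas hZ
      (fun i j hij => hindep.indepFun hij) hident).const_mul (2 * π)).const_add (2 * ‖μ‖)
  refine tendsto_of_tendsto_of_tendsto_of_le_of_le' tendsto_const_nhds hdev ?_ ?_
  all_goals
    filter_upwards [eventually_gt_atTop 0] with n hn
    have hn : (0 : ℝ) < n := Nat.cast_pos.2 hn
  · rw [le_div_iff₀ hn]
    linarith [mul_norm_integral_le_integral_perim hmeas hZ hident n]
  · rw [integral_div, div_le_iff₀ hn, add_mul, mul_assoc (2 * π), div_mul_cancel₀ _ hn.ne']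
    linarith [integral_perim_le hmeas hZ μ n]
end
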